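/- For a balanced binary tree of depth h with n = 2^h leaves, any embedding ψ of the leaves into Euclidean space ℝ^d such that pairwise tree distances are preserved up to distortion D (i.e., d_T(u,v) ≤ ‖ψ(u) − ψ(v)‖ ≤ D·d_T(u,v)) must satisfy D ≥ C·(n^{1/d})/h for some universal constant C > 0, by comparing the packing requirement of 2^h points at mutual distance ≥ 2 within a Euclidean ball of radius D·2h against the Euclidean ball volume bound (number of 1-separated points in a radius-R ball in ℝ^d is at most (2R+1)^d). -/
import Mathlib

open MeasureTheory Metric
open scoped ENNReal

lemma euclidean_packing_bound {d n : ℕ} (hd : 1 ≤ d) (hn : 0 < n)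
    (ψ : Fin n → EuclideanSpace ℝ (Fin d)) (x0 : EuclideanSpace ℝ (Fin d)) (R : ℝ)
    (hsep : ∀ u v : Fin n, u ≠ v → 2 ≤ dist (ψ u) (ψ v))
    (hball : ∀ u, dist (ψ u) x0 ≤ R) :
    (n : ℝ) ≤ (R + 1) ^ d := by
  have hR : 0 ≤ R := le_trans dist_nonneg (hball ⟨0, hn⟩)
  have hdisj : Pairwise (Function.onFun Disjoint (fun u : Fin n => ball (ψ u) 1)) := by
    intro u v huv
    exact ball_disjoint_ball (by linarith [hsep u v huv])
  have hsub : (⋃ u, ball (ψ u) 1) ⊆ ball x0 (R + 1) := by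
    intro x hx
    rcases Set.mem_iUnion.1 hx with ⟨u, hu⟩
    have := dist_triangle x (ψ u) x0
    have h1 : dist x (ψ u) < 1 := mem_ball.1 hu
    have := hball u
    have : dist x x0 < R + 1 := by
      calc dist x x0 ≤ dist x (ψ u) + dist (ψ u) x0 := dist_triangle _ _ _
        _ < 1 + R := by linarith [hball u]
        _ = R + 1 := by ring
    exact mem_ball.2 this
  have hmeas : volume (⋃ u : Fin n, ball (ψ u) 1) = ∑ u : Fin n, volume (ball (ψ u) 1) := by
    rw [measure_iUnion hdisj (fun u => measurableSet_ball), tsum_fintype]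
  have hcenter : ∀ u : Fin n, volume (ball (ψ u) 1) = volume (ball (0 : EuclideanSpace ℝ (Fin d)) 1) :=
    fun u => Measure.addHaar_ball_center volume (ψ u) 1
  have hsum : volume (⋃ u : Fin n, ball (ψ u) 1)
      = (n : ℝ≥0∞) * volume (ball (0 : EuclideanSpace ℝ (Fin d)) 1) := by
    rw [hmeas]
    simp [hcenter, Finset.sum_const, mul_comm]
  have hfr : Module.finrank ℝ (EuclideanSpace ℝ (Fin d)) = d := by
    simp [finrank_euclideanSpace]
  haveI : Nonempty (Fin d) := ⟨⟨0, hd⟩⟩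
  haveI : Nontrivial (EuclideanSpace ℝ (Fin d)) := inferInstance
  have hbig : volume (ball x0 (R + 1))
      = ENNReal.ofReal ((R + 1) ^ d) * volume (ball (0 : EuclideanSpace ℝ (Fin d)) 1) := by
    rw [Measure.addHaar_ball volume x0 (by linarith : (0:ℝ) ≤ R + 1), hfr]
  have hle : (n : ℝ≥0∞) * volume (ball (0 : EuclideanSpace ℝ (Fin d)) 1)
      ≤ ENNReal.ofReal ((R + 1) ^ d) * volume (ball (0 : EuclideanSpace ℝ (Fin d)) 1) := by
    rw [← hsum, ← hbig]
    exact measure_mono hsub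
  have h0 : volume (ball (0 : EuclideanSpace ℝ (Fin d)) 1) ≠ 0 :=
    (measure_ball_pos volume 0 one_pos).ne'
  have htop : volume (ball (0 : EuclideanSpace ℝ (Fin d)) 1) ≠ ⊤ :=
    measure_ball_lt_top.ne
  have : (n : ℝ≥0∞) ≤ ENNReal.ofReal ((R + 1) ^ d) :=
    (ENNReal.mul_le_mul_iff_left h0 htop).1 hle
  have h2 : ENNReal.ofReal (n:ℝ) ≤ ENNReal.ofReal ((R+1)^d) := by
    rw [ENNReal.ofReal_natCast]; exact this
  exact (ENNReal.ofReal_le_ofReal_iff (by positivity)).1 h2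

/-- there is a universal constant `C > 0` such that, for a balanced binary
tree of depth `h` with `n = 2^h` leaves carrying the tree metric `dT` (where distinct
leaves are at tree distance between `2` and `2h`), any embedding `ψ` of the leaves into
`ℝ^d` with distortion `D` (`dT u v ≤ ‖ψ u − ψ v‖ ≤ D · dT u v`) satisfies
`D ≥ C · n^(1/d) / h`. -/
theorem euclidean_tree_distortion_lower_bound :
    ∃ C : ℝ, 0 < C ∧
      ∀ (d h : ℕ), 1 ≤ d → 1 ≤ h →
      ∀ (n : ℕ), n = 2 ^ h →
      ∀ (dT : Fin n → Fin n → ℝ),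
        (∀ u v, u ≠ v → 2 ≤ dT u v ∧ dT u v ≤ 2 * (h : ℝ)) →
      ∀ (D : ℝ) (ψ : Fin n → EuclideanSpace ℝ (Fin d)),
        (∀ u v, dT u v ≤ ‖ψ u - ψ v‖ ∧ ‖ψ u - ψ v‖ ≤ D * dT u v) →
        C * (n : ℝ) ^ ((1 : ℝ) / (d : ℝ)) / (h : ℝ) ≤ D := by
  refine ⟨1/3, by norm_num, ?_⟩
  intro d h hd hh n hn dT hT D ψ hψ
  have hn2 : 2 ≤ n := by
    rw [hn]
    calc 2 = 2 ^ 1 := by norm_num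
      _ ≤ 2 ^ h := Nat.pow_le_pow_right (by norm_num) hh
  set u0 : Fin n := ⟨0, by omega⟩ with hu0
  set u1 : Fin n := ⟨1, by omega⟩ with hu1
  have hne : u0 ≠ u1 := by simp [hu0, hu1, Fin.ext_iff]
  obtain ⟨hT1, hT2⟩ := hT u0 u1 hne
  obtain ⟨hψ1, hψ2⟩ := hψ u0 u1
  have hh1 : (1 : ℝ) ≤ h := by exact_mod_cast hh
  have hDpos : 0 < D := by nlinarith
  have hDh : 1 ≤ D * h := by nlinarith
  have hsep : ∀ u v : Fin n, u ≠ v → 2 ≤ dist (ψ u) (ψ v) := by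
    intro u v huv
    rw [dist_eq_norm]
    exact le_trans (hT u v huv).1 (hψ u v).1
  have hball : ∀ u : Fin n, dist (ψ u) (ψ u0) ≤ 2 * D * h := by
    intro u
    by_cases hu : u = u0
    · simp [hu]; positivity
    · rw [dist_eq_norm]
      calc ‖ψ u - ψ u0‖ ≤ D * dT u u0 := (hψ u u0).2
        _ ≤ D * (2 * h) := by
            have := (hT u u0 hu).2
            nlinarith
        _ = 2 * D * h := by ring
  have hpack : (n : ℝ) ≤ (2 * D * h + 1) ^ d :=
    euclidean_packing_bound hd (by omega) ψ (ψ u0) (2 * D * h)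
      hsep hball
  have hb : (0:ℝ) ≤ 2 * D * h + 1 := by positivity
  have hdR : (0:ℝ) < d := by exact_mod_cast Nat.lt_of_lt_of_le Nat.zero_lt_one hd
  have hkey : (n : ℝ) ^ ((1:ℝ)/(d:ℝ)) ≤ 2 * D * h + 1 := by
    have h1 : (n : ℝ) ^ ((1:ℝ)/(d:ℝ)) ≤ ((2 * D * h + 1) ^ d) ^ ((1:ℝ)/(d:ℝ)) :=
      Real.rpow_le_rpow (by positivity) hpack (by positivity)
    rwa [← Real.rpow_natCast (2 * D * h + 1) d, ← Real.rpow_mul hb,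
      mul_one_div_cancel (ne_of_gt hdR), Real.rpow_one] at h1
  have hhpos : (0:ℝ) < h := by linarith
  rw [div_le_iff₀ hhpos]
  nlinarith [hkey, hDh]
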